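/- Cancellation of interior auxiliary triangles: let M be an oriented triangle mesh and p a point not on M, and fix a point x₁ on the unit sphere S²_p. For each mesh triangle with projected vertices A, B, C, form three auxiliary spherical triangles ABx₁, BCx₁, CAx₁. Then in the sum over all mesh triangles of the signed areas of all auxiliary triangles, the contributions of auxiliary triangles associated to interior mesh edges (edges shared by two triangles with opposite induced orientations) cancel, so the total sum equals the sum of signed areas of the auxiliary triangles associated to boundary edges only. -/

import Mathlib

open MeasureTheory Real Set
open scoped Classical

noncomputable section

/-- ℝ³ as a Euclidean space. -/
abbrev E3 := EuclideanSpace ℝ (Fin 3)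

/-- Dot product in ℝ³. -/
def dot3 (u v : E3) : ℝ := inner ℝ u v

/-- Cross product in ℝ³. -/
def cross3 (u v : E3) : E3 :=
  (EuclideanSpace.equiv (Fin 3) ℝ).symm
    ![u 1 * v 2 - u 2 * v 1, u 2 * v 0 - u 0 * v 2, u 0 * v 1 - u 1 * v 0]

/-- Two-argument arctangent, `atan2 y x = arg (x + i y) ∈ (-π, π]`. -/
def atan2 (y x : ℝ) : ℝ := Complex.arg ⟨x, y⟩

/-- Signed area of the spherical triangle with vertices `u v w` (Van Oosterom–Strackee). -/
def signedArea (u v w : E3) : ℝ :=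
  2 * atan2 (dot3 u (cross3 v w)) (1 + dot3 u v + dot3 u w + dot3 v w)

/-- The unit sphere S² ⊂ ℝ³. -/
def unitSphere : Set E3 := Metric.sphere 0 1

/-- Orthogonal projection of `v` onto the tangent plane of the unit sphere at `u`. -/
def tproj (u v : E3) : E3 := v - (dot3 u v) • u

/-- Normalization of a vector. -/
def nz (v : E3) : E3 := ‖v‖⁻¹ • v

/-- Interior angle at `u` of the spherical triangle `u v w`. -/
def sphAngle (u v w : E3) : ℝ :=
  Real.arccos (dot3 (tproj u v) (tproj u w) / (‖tproj u v‖ * ‖tproj u w‖))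

/-- The (closed) minor geodesic arc from `a` to `b` on the unit sphere. -/
def geoArc (a b : E3) : Set E3 :=
  {v | ∃ s t : ℝ, 0 ≤ s ∧ 0 ≤ t ∧ s • a + t • b ≠ 0 ∧ v = nz (s • a + t • b)}

/-- The (closed) spherical triangle with vertices `a b c`. -/
def sphTriangle (a b c : E3) : Set E3 :=
  {v | ∃ r s t : ℝ, 0 ≤ r ∧ 0 ≤ s ∧ 0 ≤ t ∧ r • a + s • b + t • c ≠ 0 ∧
      v = nz (r • a + s • b + t • c)}

/-- The open spherical triangle region determined by the orientation of `a b c`. -/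
def insideTri (a b c : E3) : Set E3 :=
  {v : E3 | ‖v‖ = 1 ∧
    ((0 < dot3 v (cross3 a b) ∧ 0 < dot3 v (cross3 b c) ∧ 0 < dot3 v (cross3 c a)) ∨
     (dot3 v (cross3 a b) < 0 ∧ dot3 v (cross3 b c) < 0 ∧ dot3 v (cross3 c a) < 0))}

/-- Area of a subset of ℝ³, via the 2-dimensional Hausdorff measure. -/
def area (Ω : Set E3) : ℝ := (μH[2] Ω).toReal

/-- Radial projection onto the unit sphere centered at `p`. -/
def projSph (p x : E3) : E3 := nz (x - p)

/-- Boundary of a region inside the unit sphere (frontier relative to the sphere). -/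
def sphFrontier (Ω : Set E3) : Set E3 := closure Ω ∩ closure (unitSphere \ Ω)

/-- Geodesic curvature of a unit-speed curve on the unit sphere. -/
def geodCurv (γ : ℝ → E3) (t : ℝ) : ℝ :=
  dot3 (γ t) (cross3 (deriv γ t) (deriv (deriv γ) t))

/-- Unit-speed–independent angle function of a curve's tangent relative to a tangent
vector field `X` on the sphere:  `θ t` is a continuous determination of the angle from
`X (c t)` to `deriv c t` in the oriented tangent plane at `c t`. -/
def IsAngleFor (X : E3 → E3) (c : ℝ → E3) (θ : ℝ → ℝ) : Prop :=
  Continuous θ ∧ ∀ t,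
    ‖X (c t)‖ * ‖deriv c t‖ * Real.cos (θ t) = dot3 (X (c t)) (deriv c t) ∧
    ‖X (c t)‖ * ‖deriv c t‖ * Real.sin (θ t) = dot3 (c t) (cross3 (X (c t)) (deriv c t))

/-- The geodesic circle of radius `r` around `z` on the unit sphere, with respect to
an (oriented) orthonormal tangent frame `e1, e2` at `z`. -/
def circleCurve (z e1 e2 : E3) (r t : ℝ) : E3 :=
  Real.cos r • z + Real.sin r • (Real.cos (2 * π * t) • e1 + Real.sin (2 * π * t) • e2)

/-- `X` has an isolated singularity of index 1 at `z`: the tangent of every small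
positively-oriented geodesic circle around `z` makes zero net turns relative to `X`. -/
def IndexOne (X : E3 → E3) (z : E3) : Prop :=
  ∃ e1 e2 : E3, ‖e1‖ = 1 ∧ ‖e2‖ = 1 ∧ dot3 e1 e2 = 0 ∧ dot3 z e1 = 0 ∧ dot3 z e2 = 0 ∧
    cross3 e1 e2 = z ∧
    ∃ r₀ > 0, ∀ r ∈ Ioo (0 : ℝ) r₀, ∀ θ : ℝ → ℝ,
      IsAngleFor X (circleCurve z e1 e2 r) θ → θ 1 - θ 0 = 0

/-- The Alexander numbering rule for an integer-valued function `f` relative to the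
oriented curve `γ` on the unit sphere: at every smooth point of `γ`, the value
immediately to the left exceeds the value immediately to the right by one. -/
def AlexanderRule (γ : ℝ → E3) (f : E3 → ℤ) : Prop :=
  ∀ t : ℝ, DifferentiableAt ℝ γ t → deriv γ t ≠ 0 →
    ∃ ε₀ > 0, ∀ ε ∈ Ioo 0 ε₀,
      f (nz (γ t + ε • cross3 (γ t) (deriv γ t))) =
        f (nz (γ t - ε • cross3 (γ t) (deriv γ t))) + 1

/-- The multiset of directed edges of a triangle mesh. -/
def dirEdges (m : ℕ) (tri : Fin m → Fin 3 → E3) : Multiset (E3 × E3) :=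
  (Finset.univ : Finset (Fin m)).val.bind fun i =>
    {(tri i 0, tri i 1), (tri i 1, tri i 2), (tri i 2, tri i 0)}

/-- The multiset of boundary edges of a triangle mesh (directed edges whose reversal
does not occur in the mesh). -/
def bdryEdges (m : ℕ) (tri : Fin m → Fin 3 → E3) : Multiset (E3 × E3) :=
  (dirEdges m tri).filter fun e => (dirEdges m tri).count e.swap = 0

/-- `q` lies in the open triangle `A B C`. -/
def openTriPt (A B C q : E3) : Prop :=
  ∃ a b c : ℝ, 0 < a ∧ 0 < b ∧ 0 < c ∧ a + b + c = 1 ∧ q = a • A + b • B + c • C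

/-- `q` lies in the closed triangle `A B C`. -/
def closedTriPt (A B C q : E3) : Prop :=
  ∃ a b c : ℝ, 0 ≤ a ∧ 0 ≤ b ∧ 0 ≤ c ∧ a + b + c = 1 ∧ q = a • A + b • B + c • C

/-- `q` lies on the closed segment `[A, B]`. -/
def onSeg (A B q : E3) : Prop :=
  ∃ a b : ℝ, 0 ≤ a ∧ 0 ≤ b ∧ a + b = 1 ∧ q = a • A + b • B

/-- (Unnormalized) normal of the triangle `A B C`. -/
def triNormal (A B C : E3) : E3 := cross3 (B - A) (C - A)

/-- The open ray from `p` in direction `d` meets the open triangle `A B C`. -/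
def rayHits (p d A B C : E3) : Prop := ∃ t : ℝ, 0 < t ∧ openTriPt A B C (p + t • d)

/-- Signed number of intersections of the ray from `p` in direction `d` with the mesh. -/
def chiMesh (m : ℕ) (tri : Fin m → Fin 3 → E3) (p d : E3) : ℤ :=
  ∑ i : Fin m,
    if rayHits p d (tri i 0) (tri i 1) (tri i 2) then
      (if 0 < dot3 d (triNormal (tri i 0) (tri i 1) (tri i 2)) then 1 else -1)
    else 0

/-- The ray from `p` in direction `d` is generic for the mesh: it meets no edges and
meets triangle interiors transversally. -/
def GenericRay (m : ℕ) (tri : Fin m → Fin 3 → E3) (p d : E3) : Prop :=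
  d ≠ 0 ∧
  (∀ i : Fin m, ∀ t : ℝ, 0 < t →
    ¬ onSeg (tri i 0) (tri i 1) (p + t • d) ∧
    ¬ onSeg (tri i 1) (tri i 2) (p + t • d) ∧
    ¬ onSeg (tri i 2) (tri i 0) (p + t • d)) ∧
  (∀ i : Fin m, rayHits p d (tri i 0) (tri i 1) (tri i 2) →
    dot3 d (triNormal (tri i 0) (tri i 1) (tri i 2)) ≠ 0)

/-- Sum over mesh triangles of signed areas of their radial projections to `S²_p`. -/
def meshWNsum (m : ℕ) (tri : Fin m → Fin 3 → E3) (p : E3) : ℝ :=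
  ∑ i : Fin m,
    signedArea (projSph p (tri i 0)) (projSph p (tri i 1)) (projSph p (tri i 2))

/-- The generalized winding number of a triangle mesh at `p`. -/
def meshWN (m : ℕ) (tri : Fin m → Fin 3 → E3) (p : E3) : ℝ :=
  (1 / (4 * π)) * meshWNsum m tri p

/-- Spherical linear interpolation: unit-speed-reparametrized minor great-circle arc
from `a` to `b` over the parameter interval `[0,1]`. -/
def slerp (a b : E3) (s : ℝ) : E3 :=
  (Real.sin ((1 - s) * Real.arccos (dot3 a b)) / Real.sin (Real.arccos (dot3 a b))) • a +
  (Real.sin (s * Real.arccos (dot3 a b)) / Real.sin (Real.arccos (dot3 a b))) • b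

/-- Stereographic projection from `x₀` onto the plane tangent to the sphere at `-x₀`. -/
def stereo (x₀ q : E3) : E3 := x₀ + (2 / (1 - dot3 x₀ q)) • (q - x₀)

/-- Stereographic projection in coordinates, using a tangent frame `e1, e2` at `-x₀`. -/
def stereo2 (x₀ e1 e2 q : E3) : ℝ × ℝ :=
  (dot3 (stereo x₀ q - (-x₀)) e1, dot3 (stereo x₀ q - (-x₀)) e2)

/-- Dot product in ℝ². -/
def dot2 (a b : ℝ × ℝ) : ℝ := a.1 * b.1 + a.2 * b.2

/-- Determinant of two vectors in ℝ². -/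
def det2 (a b : ℝ × ℝ) : ℝ := a.1 * b.2 - a.2 * b.1

/-- Normal vector of a parametrized surface `φ` at parameter `x`. -/
def surfNormal (φ : ℝ × ℝ → E3) (x : ℝ × ℝ) : E3 :=
  cross3 (fderiv ℝ φ x (1, 0)) (fderiv ℝ φ x (0, 1))

end
section Aux

lemma aux_dot3_eq (u v : E3) : dot3 u v = u 0 * v 0 + u 1 * v 1 + u 2 * v 2 := by
  simp [dot3, PiLp.inner_apply, Fin.sum_univ_three, RCLike.inner_apply, mul_comm]

lemma aux_cross3_apply (u v : E3) (i : Fin 3) :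
    cross3 u v i = ![u 1 * v 2 - u 2 * v 1, u 2 * v 0 - u 0 * v 2, u 0 * v 1 - u 1 * v 0] i := rfl

lemma aux_atan2_neg (y x : ℝ) (hy : y ≠ 0) : atan2 (-y) x = - atan2 y x := by
  unfold atan2
  have h : (⟨x, -y⟩ : ℂ) = starRingEnd ℂ ⟨x, y⟩ := by
    apply Complex.ext <;> simp
  rw [h, Complex.arg_conj]
  have : Complex.arg ⟨x, y⟩ ≠ π := by
    intro h'
    rw [Complex.arg_eq_pi_iff] at h'
    exact hy h'.2
  simp [this]

lemma aux_signedArea_swap (A B x : E3) (h : dot3 x (cross3 A B) ≠ 0) :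
    signedArea B A x = - signedArea A B x := by
  unfold signedArea
  have h1 : dot3 B (cross3 A x) = - dot3 A (cross3 B x) := by
    simp [aux_dot3_eq, aux_cross3_apply]; ring
  have h2 : dot3 A (cross3 B x) = dot3 x (cross3 A B) := by
    simp [aux_dot3_eq, aux_cross3_apply]; ring
  rw [h1, aux_atan2_neg _ _ (by rw [h2]; exact h)]
  have c1 : dot3 B A = dot3 A B := by simp [aux_dot3_eq]; ring
  have c2 : 1 + dot3 B A + dot3 B x + dot3 A x = 1 + dot3 A B + dot3 A x + dot3 B x := by
    rw [c1]; ring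
  rw [c2]; ring

end Aux

/-- in the sum over all mesh triangles of the signed areas of the three
auxiliary spherical triangles with apex `x₁`, the contributions of interior mesh
edges cancel, leaving exactly the contributions of the boundary edges. -/
theorem stmt6 (m : ℕ) (tri : Fin m → Fin 3 → E3) (p x₁ : E3) (hx : ‖x₁‖ = 1)
    (hpv : ∀ (i : Fin m) (j : Fin 3), tri i j ≠ p)
    (hsimple : ∀ e ∈ dirEdges m tri, (dirEdges m tri).count e = 1)
    (hmanifold : ∀ e ∈ dirEdges m tri, (dirEdges m tri).count e.swap ≤ 1)
    (hgen : ∀ e ∈ dirEdges m tri,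
      dot3 x₁ (cross3 (projSph p e.1) (projSph p e.2)) ≠ 0) :
    ((dirEdges m tri).map
        (fun e => signedArea (projSph p e.1) (projSph p e.2) x₁)).sum =
    ((bdryEdges m tri).map
        (fun e => signedArea (projSph p e.1) (projSph p e.2) x₁)).sum := by
  set f : E3 × E3 → ℝ := fun e => signedArea (projSph p e.1) (projSph p e.2) x₁ with hf
  have hanti : ∀ e ∈ dirEdges m tri, f e.swap = - f e := fun e he =>
    aux_signedArea_swap _ _ _ (hgen e he)
  set D := dirEdges m tri with hD
  set I := D.filter (fun e => ¬ D.count e.swap = 0) with hI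
  have hsplit : bdryEdges m tri + I = D := Multiset.filter_add_not _ _
  have memI : ∀ e ∈ I, e ∈ D := fun e he => (Multiset.mem_filter.mp he).1
  have hcount : ∀ e : E3 × E3, Multiset.count e I = Multiset.count e.swap I := by
    intro e
    rw [hI, Multiset.count_filter, Multiset.count_filter, Prod.swap_swap]
    by_cases h1 : Multiset.count e D = 0 <;> by_cases h2 : Multiset.count e.swap D = 0
    · simp [h1, h2]
    · simp [h1, h2]
    · simp [h1, h2]
    · have he : e ∈ D := Multiset.count_ne_zero.mp h1
      have hes : e.swap ∈ D := Multiset.count_ne_zero.mp h2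
      simp [h1, h2, hsimple e he, hsimple e.swap hes]
  have hswap : I.map Prod.swap = I := by
    ext e
    rw [show e = Prod.swap e.swap from (Prod.swap_swap e).symm,
      Multiset.count_map_eq_count' _ _ Prod.swap_injective, Prod.swap_swap]
    simpa using hcount e.swap
  have hIzero : (I.map f).sum = 0 := by
    have h1 : (I.map f).sum = (I.map (fun e => f e.swap)).sum := by
      conv_lhs => rw [← hswap, Multiset.map_map]
      rfl
    have h2 : (I.map (fun e => f e.swap)).sum = (I.map (fun e => - f e)).sum := by
      congr 1
      exact Multiset.map_congr rfl (fun e he => hanti e (memI e he))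
    have h3 : (I.map (fun e => - f e)).sum = - (I.map f).sum := by
      rw [show (fun e => - f e) = Neg.neg ∘ f from rfl, ← Multiset.map_map,
        Multiset.sum_map_neg']
    have := h1.trans (h2.trans h3)
    linarith
  calc (D.map f).sum = ((bdryEdges m tri + I).map f).sum := by rw [hsplit]
    _ = ((bdryEdges m tri).map f).sum + (I.map f).sum := by
        rw [Multiset.map_add, Multiset.sum_add]
    _ = ((bdryEdges m tri).map f).sum := by rw [hIzero, add_zero]
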